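/- arXiv:2105.11123 — 5 statements merged into one kernel-verified Lean document; each statement's English description precedes it below -/
import Mathlib

section
/- The function H : ℝ² → ℝ given by H(x,y) = xy + xy², restricted to a neighborhood of the origin, is locally separable but is not BH-separable. Consequently, the set of BH-separable smooth functions is a proper subset of the set of locally separable smooth functions. -/
/-- A function of two real variables, defined near the origin, is *locally separable*
if there is a smooth diffeomorphism `φ : V → W` between neighbourhoods of the origin,
fixing the origin, and smooth one-variable functions `H₁, H₂` with
`H(x,y) = H₁(u) + H₂(v)` on `V`, where `(u,v) = φ(x,y)`. -/
def LocSeparable2 (H : ℝ × ℝ → ℝ) : Prop :=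
  ∃ (V W : Set (ℝ × ℝ)) (φ ψ : ℝ × ℝ → ℝ × ℝ) (H₁ H₂ : ℝ → ℝ),
    IsOpen V ∧ IsOpen W ∧ ((0, 0) : ℝ × ℝ) ∈ V ∧ ((0, 0) : ℝ × ℝ) ∈ W ∧
    φ (0, 0) = (0, 0) ∧
    ContDiffOn ℝ (⊤ : ℕ∞) φ V ∧ ContDiffOn ℝ (⊤ : ℕ∞) ψ W ∧
    Set.MapsTo φ V W ∧ Set.MapsTo ψ W V ∧
    (∀ p ∈ V, ψ (φ p) = p) ∧ (∀ p ∈ W, φ (ψ p) = p) ∧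
    ContDiff ℝ (⊤ : ℕ∞) H₁ ∧ ContDiff ℝ (⊤ : ℕ∞) H₂ ∧
    (∀ p ∈ V, H p = H₁ (φ p).1 + H₂ (φ p).2)

/-- A function of two real variables, defined near the origin, is *BH-separable*
if moreover the same diffeomorphism separates the coordinates:
`x = f(u) + g(v)` and `y = h(u) + k(v)`. -/
def BHSeparable2 (H : ℝ × ℝ → ℝ) : Prop :=
  ∃ (V W : Set (ℝ × ℝ)) (φ ψ : ℝ × ℝ → ℝ × ℝ) (H₁ H₂ f g h k : ℝ → ℝ),
    IsOpen V ∧ IsOpen W ∧ ((0, 0) : ℝ × ℝ) ∈ V ∧ ((0, 0) : ℝ × ℝ) ∈ W ∧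
    φ (0, 0) = (0, 0) ∧
    ContDiffOn ℝ (⊤ : ℕ∞) φ V ∧ ContDiffOn ℝ (⊤ : ℕ∞) ψ W ∧
    Set.MapsTo φ V W ∧ Set.MapsTo ψ W V ∧
    (∀ p ∈ V, ψ (φ p) = p) ∧ (∀ p ∈ W, φ (ψ p) = p) ∧
    ContDiff ℝ (⊤ : ℕ∞) H₁ ∧ ContDiff ℝ (⊤ : ℕ∞) H₂ ∧ ContDiff ℝ (⊤ : ℕ∞) f ∧
    ContDiff ℝ (⊤ : ℕ∞) g ∧ ContDiff ℝ (⊤ : ℕ∞) h ∧ ContDiff ℝ (⊤ : ℕ∞) k ∧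
    (∀ p ∈ V, H p = H₁ (φ p).1 + H₂ (φ p).2) ∧
    (∀ p ∈ V, p.1 = f (φ p).1 + g (φ p).2) ∧
    (∀ p ∈ V, p.2 = h (φ p).1 + k (φ p).2)

open Set

private lemma deriv_eq_zero_on_Ioo {F : ℝ → ℝ} {a b x e : ℝ} (hx : x ∈ Set.Ioo a b)
    (h : ∀ y ∈ Set.Ioo a b, F y = 0) (hF : HasDerivAt F e x) : e = 0 := by
  have h1 : F =ᶠ[nhds x] fun _ => (0:ℝ) := by
    filter_upwards [isOpen_Ioo.mem_nhds hx] with y hy using h y hy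
  exact hF.unique ((hasDerivAt_const x (0:ℝ)).congr_of_eventuallyEq h1)

private lemma not_bh : ¬ ∃ (V W : Set (ℝ × ℝ)) (φ ψ : ℝ × ℝ → ℝ × ℝ) (H₁ H₂ f g h k : ℝ → ℝ),
    IsOpen V ∧ IsOpen W ∧ ((0, 0) : ℝ × ℝ) ∈ V ∧ ((0, 0) : ℝ × ℝ) ∈ W ∧
    φ (0, 0) = (0, 0) ∧
    ContDiffOn ℝ (⊤ : ℕ∞) φ V ∧ ContDiffOn ℝ (⊤ : ℕ∞) ψ W ∧
    Set.MapsTo φ V W ∧ Set.MapsTo ψ W V ∧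
    (∀ p ∈ V, ψ (φ p) = p) ∧ (∀ p ∈ W, φ (ψ p) = p) ∧
    ContDiff ℝ (⊤ : ℕ∞) H₁ ∧ ContDiff ℝ (⊤ : ℕ∞) H₂ ∧ ContDiff ℝ (⊤ : ℕ∞) f ∧
    ContDiff ℝ (⊤ : ℕ∞) g ∧ ContDiff ℝ (⊤ : ℕ∞) h ∧ ContDiff ℝ (⊤ : ℕ∞) k ∧
    (∀ p ∈ V, (fun p : ℝ × ℝ => p.1 * p.2 + p.1 * p.2 ^ 2) p = H₁ (φ p).1 + H₂ (φ p).2) ∧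
    (∀ p ∈ V, p.1 = f (φ p).1 + g (φ p).2) ∧
    (∀ p ∈ V, p.2 = h (φ p).1 + k (φ p).2) := by
  rintro ⟨V, W, φ, ψ, H₁, H₂, f, g, h, k, hV, hW, h0V, h0W, hφ0, hφs, hψs, hmVW, hmWV,
    hlinv, hrinv, hH₁, hH₂, hf, hg, hh, hk, hHeq, hxeq, hyeq⟩
  -- basic facts
  have hle : ((⊤:ℕ∞) : WithTop ℕ∞) ≠ 0 := by simp
  have hψ0 : ψ (0, 0) = (0, 0) := by have := hlinv (0,0) h0V; rw [hφ0] at this; exact this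
  set U : Set (ℝ × ℝ) := W ∩ ψ ⁻¹' V with hUdef
  have hUopen : IsOpen U := (hψs.continuousOn).isOpen_inter_preimage hW hV
  have h0U : ((0,0) : ℝ × ℝ) ∈ U := ⟨h0W, by show ψ (0,0) ∈ V; rw [hψ0]; exact h0V⟩
  have hψ_eq : ∀ q ∈ U, ψ q = (f q.1 + g q.2, h q.1 + k q.2) := by
    intro q hq
    have hqW : q ∈ W := hq.1
    have hqV : ψ q ∈ V := hq.2
    have h1 := hxeq (ψ q) hqV
    have h2 := hyeq (ψ q) hqV
    rw [hrinv q hqW] at h1 h2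
    exact Prod.ext h1 h2
  have hfg0 : f 0 + g 0 = 0 := by
    have := hψ_eq (0,0) h0U; rw [hψ0] at this
    exact (congrArg Prod.fst this).symm
  have hhk0 : h 0 + k 0 = 0 := by
    have := hψ_eq (0,0) h0U; rw [hψ0] at this
    exact (congrArg Prod.snd this).symm
  have hG : ∀ q ∈ U, H₁ q.1 + H₂ q.2 =
      (f q.1 + g q.2) * (h q.1 + k q.2) + (f q.1 + g q.2) * (h q.1 + k q.2)^2 := by
    intro q hq
    have hqV : ψ q ∈ V := hq.2
    have h1 := hHeq (ψ q) hqV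
    rw [hrinv q hq.1] at h1
    rw [← h1, hψ_eq q hq]
  -- a square inside U
  obtain ⟨r, hr, hball⟩ := Metric.isOpen_iff.mp hUopen _ h0U
  have hsq : ∀ u ∈ Ioo (-r) r, ∀ v ∈ Ioo (-r) r, ((u,v) : ℝ × ℝ) ∈ U := by
    intro u hu v hv
    apply hball
    rw [Metric.mem_ball, Prod.dist_eq]
    simp only [Real.dist_eq, sub_zero]
    exact max_lt (abs_lt.mpr ⟨hu.1, hu.2⟩) (abs_lt.mpr ⟨hv.1, hv.2⟩)
  -- differentiability facts
  have hfD : Differentiable ℝ f := hf.differentiable hle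
  have hgD : Differentiable ℝ g := hg.differentiable hle
  have hhD : Differentiable ℝ h := hh.differentiable hle
  have hkD : Differentiable ℝ k := hk.differentiable hle
  have hH₁D : Differentiable ℝ H₁ := hH₁.differentiable hle
  have hfD' : Differentiable ℝ (deriv f) := ((contDiff_infty_iff_deriv.mp hf).2).differentiable hle
  have hgD' : Differentiable ℝ (deriv g) := ((contDiff_infty_iff_deriv.mp hg).2).differentiable hle
  have hhD' : Differentiable ℝ (deriv h) := ((contDiff_infty_iff_deriv.mp hh).2).differentiable hle
  have hkD' : Differentiable ℝ (deriv k) := ((contDiff_infty_iff_deriv.mp hk).2).differentiable hle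
  -- Step 1 : differentiate in u
  have E1 : ∀ u ∈ Ioo (-r) r, ∀ v ∈ Ioo (-r) r,
      deriv H₁ u - (deriv f u * ((h u + k v) + (h u + k v)^2)
        + (f u + g v) * (deriv h u + 2*(h u + k v)*deriv h u)) = 0 := by
    intro u hu v hv
    have hzero : ∀ y ∈ Ioo (-r) r, (fun u => H₁ u + H₂ v -
        ((f u + g v) * (h u + k v) + (f u + g v) * (h u + k v)^2)) y = 0 := by
      intro y hy
      have := hG (y, v) (hsq y hy v hv)
      simp only at this ⊢
      linarith
    have hD : HasDerivAt (fun u => H₁ u + H₂ v -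
        ((f u + g v) * (h u + k v) + (f u + g v) * (h u + k v)^2))
        (deriv H₁ u - (deriv f u * ((h u + k v) + (h u + k v)^2)
          + (f u + g v) * (deriv h u + 2*(h u + k v)*deriv h u))) u := by
      have df : HasDerivAt f (deriv f u) u := (hfD u).hasDerivAt
      have dh : HasDerivAt h (deriv h u) u := (hhD u).hasDerivAt
      have dH : HasDerivAt H₁ (deriv H₁ u) u := (hH₁D u).hasDerivAt
      have dX : HasDerivAt (fun u => f u + g v) (deriv f u) u := df.add_const _
      have dY : HasDerivAt (fun u => h u + k v) (deriv h u) u := dh.add_const _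
      have dY2 : HasDerivAt (fun u => (h u + k v)^2) (2*(h u + k v)*deriv h u) u := by
        have := dY.pow 2
        exact this.congr_deriv (by push_cast; ring)
      have := ((dH.add_const (H₂ v)).sub ((dX.mul dY).add (dX.mul dY2)))
      exact this.congr_deriv (by ring)
    exact deriv_eq_zero_on_Ioo hu hzero hD
  -- Step 2 : differentiate in v
  have E : ∀ u ∈ Ioo (-r) r, ∀ v ∈ Ioo (-r) r,
      deriv f u * deriv k v * (1 + 2*(h u + k v))
        + deriv g v * deriv h u * (1 + 2*(h u + k v))
        + 2*(f u + g v) * deriv h u * deriv k v = 0 := by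
    intro u hu v hv
    have hzero : ∀ y ∈ Ioo (-r) r, (fun v => deriv H₁ u -
        (deriv f u * ((h u + k v) + (h u + k v)^2)
          + (f u + g v) * (deriv h u + 2*(h u + k v)*deriv h u))) y = 0 :=
      fun y hy => E1 u hu y hy
    have hD : HasDerivAt (fun v => deriv H₁ u -
        (deriv f u * ((h u + k v) + (h u + k v)^2)
          + (f u + g v) * (deriv h u + 2*(h u + k v)*deriv h u)))
        (-(deriv f u * deriv k v * (1 + 2*(h u + k v))
          + deriv g v * deriv h u * (1 + 2*(h u + k v))
          + 2*(f u + g v) * deriv h u * deriv k v)) v := by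
      have dg : HasDerivAt g (deriv g v) v := (hgD v).hasDerivAt
      have dk : HasDerivAt k (deriv k v) v := (hkD v).hasDerivAt
      have dX : HasDerivAt (fun v => f u + g v) (deriv g v) v := dg.const_add _
      have dY : HasDerivAt (fun v => h u + k v) (deriv k v) v := dk.const_add _
      have dY2 : HasDerivAt (fun v => (h u + k v)^2) (2*(h u + k v)*deriv k v) v := by
        have := dY.pow 2
        exact this.congr_deriv (by push_cast; ring)
      have dB : HasDerivAt (fun v => deriv h u + 2*(h u + k v)*deriv h u)
          (2*deriv k v*deriv h u) v := by
        have := ((dY.const_mul 2).mul_const (deriv h u)).const_add (deriv h u)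
        convert this using 1 <;> ring
      have := (hasDerivAt_const v (deriv H₁ u)).sub
        (((dY.add dY2).const_mul (deriv f u)).add (dX.mul dB))
      exact this.congr_deriv (by ring)
    have := deriv_eq_zero_on_Ioo hv hzero hD
    linarith
  -- derivatives at zero
  have h0I : (0:ℝ) ∈ Ioo (-r) r := ⟨by linarith, hr⟩
  have E00 : deriv f 0 * deriv k 0 + deriv g 0 * deriv h 0 = 0 := by
    have h1 := E 0 h0I 0 h0I
    rw [hhk0, hfg0] at h1
    linear_combination h1
  -- the Jacobian of ψ at the origin is invertible
  have hdet : deriv f 0 * deriv k 0 - deriv g 0 * deriv h 0 ≠ 0 := by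
    intro hdet0
    set L : ℝ × ℝ →L[ℝ] ℝ × ℝ :=
      ((deriv f 0 • ContinuousLinearMap.fst ℝ ℝ ℝ + deriv g 0 • ContinuousLinearMap.snd ℝ ℝ ℝ).prod
       (deriv h 0 • ContinuousLinearMap.fst ℝ ℝ ℝ + deriv k 0 • ContinuousLinearMap.snd ℝ ℝ ℝ)) with hL
    have hLapp : ∀ w : ℝ × ℝ, L w = (deriv f 0 * w.1 + deriv g 0 * w.2,
        deriv h 0 * w.1 + deriv k 0 * w.2) := by
      intro w
      simp [hL, ContinuousLinearMap.prod_apply]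
    have hSd : HasFDerivAt (fun q : ℝ × ℝ => (f q.1 + g q.2, h q.1 + k q.2)) L (0,0) := by
      apply HasFDerivAt.prodMk
      · have h1 : HasFDerivAt (f ∘ Prod.fst) (deriv f 0 • ContinuousLinearMap.fst ℝ ℝ ℝ) ((0,0) : ℝ × ℝ) :=
          HasDerivAt.comp_hasFDerivAt _ ((hfD 0).hasDerivAt) hasFDerivAt_fst
        have h2 : HasFDerivAt (g ∘ Prod.snd) (deriv g 0 • ContinuousLinearMap.snd ℝ ℝ ℝ) ((0,0) : ℝ × ℝ) :=
          HasDerivAt.comp_hasFDerivAt _ ((hgD 0).hasDerivAt) hasFDerivAt_snd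
        exact h1.add h2
      · have h1 : HasFDerivAt (h ∘ Prod.fst) (deriv h 0 • ContinuousLinearMap.fst ℝ ℝ ℝ) ((0,0) : ℝ × ℝ) :=
          HasDerivAt.comp_hasFDerivAt _ ((hhD 0).hasDerivAt) hasFDerivAt_fst
        have h2 : HasFDerivAt (k ∘ Prod.snd) (deriv k 0 • ContinuousLinearMap.snd ℝ ℝ ℝ) ((0,0) : ℝ × ℝ) :=
          HasDerivAt.comp_hasFDerivAt _ ((hkD 0).hasDerivAt) hasFDerivAt_snd
        exact h1.add h2
    have hS00 : ((f (0:ℝ) + g (0:ℝ), h (0:ℝ) + k (0:ℝ)) : ℝ × ℝ) = ((0,0) : ℝ × ℝ) := by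
      rw [hfg0, hhk0]
    have hφd : HasFDerivAt φ (fderiv ℝ φ ((0,0):ℝ×ℝ))
        ((fun q : ℝ × ℝ => (f q.1 + g q.2, h q.1 + k q.2)) (0,0)) := by
      show HasFDerivAt φ _ ((f (0:ℝ) + g (0:ℝ), h (0:ℝ) + k (0:ℝ)) : ℝ × ℝ)
      rw [hS00]
      exact ((hφs.contDiffAt (hV.mem_nhds h0V)).differentiableAt hle).hasFDerivAt
    have hcomp : HasFDerivAt (φ ∘ fun q : ℝ × ℝ => (f q.1 + g q.2, h q.1 + k q.2))
        ((fderiv ℝ φ ((0,0):ℝ×ℝ)).comp L) (0,0) := HasFDerivAt.comp ((0,0):ℝ×ℝ) hφd hSd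
    have hev : (φ ∘ fun q : ℝ × ℝ => (f q.1 + g q.2, h q.1 + k q.2)) =ᶠ[nhds ((0,0):ℝ×ℝ)] id := by
      filter_upwards [hUopen.mem_nhds h0U] with q hq
      show φ (f q.1 + g q.2, h q.1 + k q.2) = q
      rw [← hψ_eq q hq]
      exact hrinv q hq.1
    have hid : HasFDerivAt (φ ∘ fun q : ℝ × ℝ => (f q.1 + g q.2, h q.1 + k q.2))
        (ContinuousLinearMap.id ℝ (ℝ × ℝ)) (0,0) :=
      (hasFDerivAt_id ((0,0):ℝ×ℝ)).congr_of_eventuallyEq hev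
    have huniq : (fderiv ℝ φ ((0,0):ℝ×ℝ)).comp L = ContinuousLinearMap.id ℝ (ℝ × ℝ) :=
      hcomp.unique hid
    have hinj : ∀ w : ℝ × ℝ, L w = 0 → w = 0 := by
      intro w hw
      have h1 := congrArg (fun T : ℝ × ℝ →L[ℝ] ℝ × ℝ => T w) huniq
      simpa [hw] using h1.symm
    rcases eq_or_ne ((-(deriv g 0), deriv f 0) : ℝ × ℝ) 0 with hz | hnz
    · have hb0 : deriv g 0 = 0 := by
        have := congrArg Prod.fst hz; simp at this; exact this
      have ha0 : deriv f 0 = 0 := congrArg Prod.snd hz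
      rcases eq_or_ne ((-(deriv k 0), deriv h 0) : ℝ × ℝ) 0 with hz2 | hnz2
      · have hd0 : deriv k 0 = 0 := by
          have := congrArg Prod.fst hz2; simp at this; exact this
        have hc0 : deriv h 0 = 0 := congrArg Prod.snd hz2
        have := hinj (1, 0) (by rw [hLapp]; simp [ha0, hb0, hc0, hd0])
        simpa [Prod.ext_iff] using this
      · refine hnz2 (hinj _ ?_)
        rw [hLapp, Prod.mk_eq_zero]
        constructor
        · simp [ha0, hb0]
        · ring
    · refine hnz (hinj _ ?_)
      rw [hLapp, Prod.mk_eq_zero]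
      constructor
      · ring
      · simp only
        linear_combination hdet0
  -- all four first derivatives are nonzero
  have had : deriv f 0 * deriv k 0 ≠ 0 := by
    intro hz; exact hdet (by linarith)
  have hbc : deriv g 0 * deriv h 0 ≠ 0 := by
    intro hz; exact hdet (by linarith)
  have ha1 : deriv f 0 ≠ 0 := left_ne_zero_of_mul had
  have hd1 : deriv k 0 ≠ 0 := right_ne_zero_of_mul had
  have hb1 : deriv g 0 ≠ 0 := left_ne_zero_of_mul hbc
  have hc1 : deriv h 0 ≠ 0 := right_ne_zero_of_mul hbc
  -- a smaller interval where deriv h and deriv k do not vanish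
  have hev1 : ∀ᶠ x in nhds (0:ℝ), deriv h x ≠ 0 ∧ deriv k x ≠ 0 :=
    (hhD'.continuous.continuousAt.eventually_ne hc1).and
      (hkD'.continuous.continuousAt.eventually_ne hd1)
  obtain ⟨ε, hε, hball2⟩ := Metric.eventually_nhds_iff.mp hev1
  set r' : ℝ := min r ε with hr'def
  have hr' : 0 < r' := lt_min hr hε
  have hI'sub : Ioo (-r') r' ⊆ Ioo (-r) r :=
    Ioo_subset_Ioo (neg_le_neg (min_le_left _ _)) (min_le_left _ _)
  have hne : ∀ x ∈ Ioo (-r') r', deriv h x ≠ 0 ∧ deriv k x ≠ 0 := by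
    intro x hx
    apply hball2
    rw [Real.dist_eq, sub_zero]
    have : |x| < r' := abs_lt.mpr ⟨hx.1, hx.2⟩
    exact lt_of_lt_of_le this (min_le_right _ _)
  have h0I' : (0:ℝ) ∈ Ioo (-r') r' := ⟨by linarith, hr'⟩
  set A : ℝ → ℝ := fun u => deriv f u / deriv h u with hA
  set B : ℝ → ℝ := fun v => deriv g v / deriv k v with hB
  have hAd : ∀ u ∈ Ioo (-r') r', HasDerivAt A (deriv A u) u := by
    intro u hu
    exact (((hfD' u).div (hhD' u) (hne u hu).1)).hasDerivAt
  have hBd : ∀ v ∈ Ioo (-r') r', HasDerivAt B (deriv B v) v := by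
    intro v hv
    exact (((hgD' v).div (hkD' v) (hne v hv).2)).hasDerivAt
  -- the key functional equation
  have hstar : ∀ u ∈ Ioo (-r') r', ∀ v ∈ Ioo (-r') r',
      (1 + 2*(h u + k v)) * (A u + B v) + 2*(f u + g v) = 0 := by
    intro u hu v hv
    have hE := E u (hI'sub hu) v (hI'sub hv)
    have h1 := (hne u hu).1
    have h2 := (hne v hv).2
    rw [hA, hB]
    simp only
    field_simp
    linear_combination hE
  -- differentiate hstar in u
  have F1 : ∀ u ∈ Ioo (-r') r', ∀ v ∈ Ioo (-r') r',
      2*deriv h u*(A u + B v) + (1 + 2*(h u + k v)) * deriv A u + 2*deriv f u = 0 := by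
    intro u hu v hv
    have hzero : ∀ y ∈ Ioo (-r') r',
        (fun u => (1 + 2*(h u + k v)) * (A u + B v) + 2*(f u + g v)) y = 0 :=
      fun y hy => hstar y hy v hv
    have hD : HasDerivAt (fun u => (1 + 2*(h u + k v)) * (A u + B v) + 2*(f u + g v))
        (2*deriv h u*(A u + B v) + (1 + 2*(h u + k v)) * deriv A u + 2*deriv f u) u := by
      have dY : HasDerivAt (fun u => 1 + 2*(h u + k v)) (2*deriv h u) u := by
        have := (((hhD u).hasDerivAt.add_const (k v)).const_mul 2).const_add 1
        convert this using 1 <;> ring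
      have dAB : HasDerivAt (fun u => A u + B v) (deriv A u) u := (hAd u hu).add_const _
      have dX : HasDerivAt (fun u => 2*(f u + g v)) (2*deriv f u) u := by
        have := ((hfD u).hasDerivAt.add_const (g v)).const_mul 2
        convert this using 1 <;> ring
      have := (dY.mul dAB).add dX
      exact this.congr_deriv (by ring)
    exact deriv_eq_zero_on_Ioo hu hzero hD
  -- differentiate hstar in v
  have F1v : ∀ u ∈ Ioo (-r') r', ∀ v ∈ Ioo (-r') r',
      2*deriv k v*(A u + B v) + (1 + 2*(h u + k v)) * deriv B v + 2*deriv g v = 0 := by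
    intro u hu v hv
    have hzero : ∀ y ∈ Ioo (-r') r',
        (fun v => (1 + 2*(h u + k v)) * (A u + B v) + 2*(f u + g v)) y = 0 :=
      fun y hy => hstar u hu y hy
    have hD : HasDerivAt (fun v => (1 + 2*(h u + k v)) * (A u + B v) + 2*(f u + g v))
        (2*deriv k v*(A u + B v) + (1 + 2*(h u + k v)) * deriv B v + 2*deriv g v) v := by
      have dY : HasDerivAt (fun v => 1 + 2*(h u + k v)) (2*deriv k v) v := by
        have := (((hkD v).hasDerivAt.const_add (h u)).const_mul 2).const_add 1
        convert this using 1 <;> ring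
      have dAB : HasDerivAt (fun v => A u + B v) (deriv B v) v := (hBd v hv).const_add _
      have dX : HasDerivAt (fun v => 2*(f u + g v)) (2*deriv g v) v := by
        have := ((hgD v).hasDerivAt.const_add (f u)).const_mul 2
        convert this using 1 <;> ring
      have := (dY.mul dAB).add dX
      exact this.congr_deriv (by ring)
    exact deriv_eq_zero_on_Ioo hv hzero hD
  -- differentiate F1 in v
  have F2 : ∀ u ∈ Ioo (-r') r', ∀ v ∈ Ioo (-r') r',
      deriv h u * deriv B v + deriv k v * deriv A u = 0 := by
    intro u hu v hv
    have hzero : ∀ y ∈ Ioo (-r') r',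
        (fun v => 2*deriv h u*(A u + B v) + (1 + 2*(h u + k v)) * deriv A u + 2*deriv f u) y = 0 :=
      fun y hy => F1 u hu y hy
    have hD : HasDerivAt
        (fun v => 2*deriv h u*(A u + B v) + (1 + 2*(h u + k v)) * deriv A u + 2*deriv f u)
        (2*(deriv h u * deriv B v + deriv k v * deriv A u)) v := by
      have dAB : HasDerivAt (fun v => 2*deriv h u*(A u + B v)) (2*deriv h u * deriv B v) v :=
        ((hBd v hv).const_add (A u)).const_mul _
      have dY : HasDerivAt (fun v => (1 + 2*(h u + k v)) * deriv A u) (2*deriv k v * deriv A u) v := by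
        have := ((((hkD v).hasDerivAt.const_add (h u)).const_mul 2).const_add 1).mul_const (deriv A u)
        convert this using 1 <;> ring
      have := (dAB.add dY).add_const (2*deriv f u)
      exact this.congr_deriv (by ring)
    have := deriv_eq_zero_on_Ioo hv hzero hD
    linarith
  -- the proportionality constant
  set lam : ℝ := -(deriv B 0)/(deriv k 0) with hlam
  have hA' : ∀ u ∈ Ioo (-r') r', deriv A u = lam * deriv h u := by
    intro u hu
    have h1 := F2 u hu 0 h0I'
    rw [hlam, div_mul_eq_mul_div, eq_div_iff hd1]
    linear_combination h1
  have hB' : ∀ v ∈ Ioo (-r') r', deriv B v = -lam * deriv k v := by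
    intro v hv
    have h1 := F2 0 h0I' v hv
    rw [hA' 0 h0I'] at h1
    have h2 : deriv h 0 * (deriv B v + lam * deriv k v) = 0 := by linear_combination h1
    have h3 := (mul_eq_zero.mp h2).resolve_left hc1
    linarith
  have hfA : ∀ u ∈ Ioo (-r') r', deriv f u = A u * deriv h u := by
    intro u hu
    rw [hA]
    exact (div_mul_cancel₀ _ (hne u hu).1).symm
  have hgB : ∀ v ∈ Ioo (-r') r', deriv g v = B v * deriv k v := by
    intro v hv
    rw [hB]
    exact (div_mul_cancel₀ _ (hne v hv).2).symm
  -- the reduced equations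
  have G1 : ∀ u ∈ Ioo (-r') r', ∀ v ∈ Ioo (-r') r',
      2*(A u + B v) + lam*(1 + 2*(h u + k v)) + 2*A u = 0 := by
    intro u hu v hv
    have h1 := F1 u hu v hv
    rw [hA' u hu, hfA u hu] at h1
    have h3 : deriv h u * (2*(A u + B v) + lam*(1 + 2*(h u + k v)) + 2*A u) = 0 := by
      linear_combination h1
    exact (mul_eq_zero.mp h3).resolve_left (hne u hu).1
  have G2 : ∀ u ∈ Ioo (-r') r', ∀ v ∈ Ioo (-r') r',
      2*(A u + B v) - lam*(1 + 2*(h u + k v)) + 2*B v = 0 := by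
    intro u hu v hv
    have h1 := F1v u hu v hv
    rw [hB' v hv, hgB v hv] at h1
    have h3 : deriv k v * (2*(A u + B v) - lam*(1 + 2*(h u + k v)) + 2*B v) = 0 := by
      linear_combination h1
    exact (mul_eq_zero.mp h3).resolve_left (hne v hv).2
  have hAB : ∀ u ∈ Ioo (-r') r', ∀ v ∈ Ioo (-r') r', A u + B v = 0 := by
    intro u hu v hv
    have h1 := G1 u hu v hv
    have h2 := G2 u hu v hv
    linarith
  -- lam must vanish
  have hlam0fun : ∀ u ∈ Ioo (-r') r', lam*(1 + 2*(h u + k 0)) + 2*(A 0) = 0 := by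
    intro u hu
    have h1 := G1 u hu 0 h0I'
    have h2 := hAB u hu 0 h0I'
    have h3 := hAB 0 h0I' 0 h0I'
    -- A u = A 0
    have h4 : A u = A 0 := by linarith
    rw [h2] at h1  -- ?
    linarith [h1, h4]
  have hlamzero : lam = 0 := by
    have hzero : ∀ y ∈ Ioo (-r') r',
        (fun u => lam*(1 + 2*(h u + k 0)) + 2*(A 0)) y = 0 := fun y hy => hlam0fun y hy
    have hD : HasDerivAt (fun u => lam*(1 + 2*(h u + k 0)) + 2*(A 0))
        (lam * (2 * deriv h 0)) 0 := by
      have := ((((hhD 0).hasDerivAt.add_const (k 0)).const_mul 2).const_add 1).const_mul lam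
        |>.add_const (2*(A 0))
      convert this using 1 <;> ring
    have := deriv_eq_zero_on_Ioo h0I' hzero hD
    rcases mul_eq_zero.mp this with h1 | h1
    · exact h1
    · exact absurd (by linarith : deriv h 0 = 0) hc1
  have hA0 : A 0 = 0 := by
    have := hlam0fun 0 h0I'
    rw [hlamzero] at this
    linarith
  rw [hA] at hA0
  simp only at hA0
  exact ha1 ((div_eq_zero_iff.mp hA0).resolve_right hc1)

private lemma loc_sep : ∃ (V W : Set (ℝ × ℝ)) (φ ψ : ℝ × ℝ → ℝ × ℝ) (H₁ H₂ : ℝ → ℝ),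
    IsOpen V ∧ IsOpen W ∧ ((0, 0) : ℝ × ℝ) ∈ V ∧ ((0, 0) : ℝ × ℝ) ∈ W ∧
    φ (0, 0) = (0, 0) ∧
    ContDiffOn ℝ (⊤ : ℕ∞) φ V ∧ ContDiffOn ℝ (⊤ : ℕ∞) ψ W ∧
    Set.MapsTo φ V W ∧ Set.MapsTo ψ W V ∧
    (∀ p ∈ V, ψ (φ p) = p) ∧ (∀ p ∈ W, φ (ψ p) = p) ∧
    ContDiff ℝ (⊤ : ℕ∞) H₁ ∧ ContDiff ℝ (⊤ : ℕ∞) H₂ ∧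
    (∀ p ∈ V, (fun p : ℝ × ℝ => p.1 * p.2 + p.1 * p.2 ^ 2) p = H₁ (φ p).1 + H₂ (φ p).2) := by
  refine ⟨{p : ℝ × ℝ | -(1/2) < p.2}, {q : ℝ × ℝ | -(1/2) < q.1 - q.2},
    fun p => (p.1 + p.2 + p.2^2, p.1 - p.2 - p.2^2),
    fun q => ((q.1 + q.2)/2, (-1 + Real.sqrt (1 + 2*(q.1 - q.2)))/2),
    fun s => s^2/4, fun t => -t^2/4, ?_, ?_, ?_, ?_, ?_, ?_, ?_, ?_, ?_, ?_, ?_, ?_, ?_, ?_⟩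
  · exact isOpen_Ioi.preimage continuous_snd
  · exact isOpen_Ioi.preimage (continuous_fst.sub continuous_snd)
  · norm_num
  · norm_num
  · norm_num
  · exact (ContDiff.contDiffOn (by fun_prop))
  · intro q hq
    have hpos : (0:ℝ) < 1 + 2*(q.1 - q.2) := by simp only [mem_setOf_eq] at hq; linarith
    apply ContDiffAt.contDiffWithinAt
    apply ContDiffAt.prodMk
    · exact ContDiffAt.div_const (by fun_prop) 2
    · have h1 : ContDiffAt ℝ (⊤:ℕ∞) Real.sqrt (1 + 2*(q.1 - q.2)) :=
        Real.contDiffAt_sqrt (ne_of_gt hpos)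
      have h2 : ContDiffAt ℝ (⊤:ℕ∞) (fun q : ℝ × ℝ => 1 + 2*(q.1 - q.2)) q := by fun_prop
      exact ContDiffAt.div_const (contDiffAt_const.add (ContDiffAt.comp q h1 h2)) 2
  · intro p hp
    simp only [mem_setOf_eq] at hp ⊢
    nlinarith [sq_nonneg (1 + 2*p.2)]
  · intro q hq
    simp only [mem_setOf_eq] at hq ⊢
    have : (0:ℝ) < Real.sqrt (1 + 2*(q.1-q.2)) := Real.sqrt_pos.mpr (by linarith)
    linarith
  · intro p hp
    simp only [mem_setOf_eq] at hp
    have h1 : 1 + 2*((p.1 + p.2 + p.2^2) - (p.1 - p.2 - p.2^2)) = (1+2*p.2)^2 := by ring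
    have h2 : Real.sqrt ((1+2*p.2)^2) = 1+2*p.2 := Real.sqrt_sq (by linarith)
    ext <;> simp only [h1, h2] <;> ring
  · intro q hq
    simp only [mem_setOf_eq] at hq
    have h0 : (0:ℝ) ≤ 1 + 2*(q.1-q.2) := by linarith
    have hs := Real.sq_sqrt h0
    set s := Real.sqrt (1 + 2*(q.1-q.2)) with hsdef
    ext <;> simp only <;> nlinarith [hs]
  · exact ContDiff.div_const (by fun_prop) 4
  · have : ContDiff ℝ (⊤:ℕ∞) (fun t : ℝ => -(t^2/4)) := ContDiff.neg (ContDiff.div_const (by fun_prop) 4)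
    simpa [neg_div] using this
  · intro p hp; simp only; ring

/-- `H(x,y) = xy + xy²` is locally separable but not BH-separable; consequently the
set of BH-separable smooth functions is a proper subset of the set of locally
separable smooth functions. -/
theorem locSeparable_not_bhSeparable_xy_add_xy_sq :
    LocSeparable2 (fun p : ℝ × ℝ => p.1 * p.2 + p.1 * p.2 ^ 2) ∧
    ¬ BHSeparable2 (fun p : ℝ × ℝ => p.1 * p.2 + p.1 * p.2 ^ 2) ∧
    {F : ℝ × ℝ → ℝ | ContDiff ℝ (⊤ : ℕ∞) F ∧ BHSeparable2 F} ⊂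
      {F : ℝ × ℝ → ℝ | ContDiff ℝ (⊤ : ℕ∞) F ∧ LocSeparable2 F} := by
  have hloc : LocSeparable2 (fun p : ℝ × ℝ => p.1 * p.2 + p.1 * p.2 ^ 2) := by
    rw [LocSeparable2]; exact loc_sep
  have hnot : ¬ BHSeparable2 (fun p : ℝ × ℝ => p.1 * p.2 + p.1 * p.2 ^ 2) := by
    rw [BHSeparable2]; exact not_bh
  have hsmooth : ContDiff ℝ (⊤ : ℕ∞) (fun p : ℝ × ℝ => p.1 * p.2 + p.1 * p.2 ^ 2) := by
    fun_prop
  refine ⟨hloc, hnot, ?_, ?_⟩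
  · rintro F ⟨hF, hbh⟩
    obtain ⟨V, W, φ, ψ, H₁, H₂, f, g, h, k, h1, h2, h3, h4, h5, h6, h7, h8, h9, h10,
      h11, h12, h13, h14, h15, h16, h17, h18, h19, h20⟩ := hbh
    exact ⟨hF, V, W, φ, ψ, H₁, H₂, h1, h2, h3, h4, h5, h6, h7, h8, h9, h10, h11, h12, h13, h18⟩
  · intro hsub
    have := hsub ⟨hsmooth, hloc⟩
    exact hnot this.2
end

section
/- For every d ∈ ℝ, the function H : ℝ² → ℝ given by H(x,y) = xy + dy³ is BH-separable. -/
noncomputable section BHaux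

/-- Jacobian matrix of `F` at `(u,v)` as a linear map. -/
def BHlinA (d u v : ℝ) : (ℝ × ℝ) →ₗ[ℝ] (ℝ × ℝ) where
  toFun p := ((1 - 6*d*u) * p.1 + (-1 - 6*d*v) * p.2, p.1 + p.2)
  map_add' p q := by ext <;> simp <;> ring
  map_smul' c q := by ext <;> simp <;> ring

/-- Inverse Jacobian. -/
def BHlinB (d u v : ℝ) : (ℝ × ℝ) →ₗ[ℝ] (ℝ × ℝ) where
  toFun p := ((p.1 + (1 + 6*d*v) * p.2) / (2 - 6*d*(u-v)),
              (-p.1 + (1 - 6*d*u) * p.2) / (2 - 6*d*(u-v)))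
  map_add' p q := by ext <;> simp <;> ring
  map_smul' c q := by ext <;> simp <;> ring

def BHDequiv (d u v : ℝ) (h : 2 - 6*d*(u-v) ≠ 0) : (ℝ × ℝ) ≃L[ℝ] (ℝ × ℝ) :=
  (LinearEquiv.ofLinear (BHlinA d u v) (BHlinB d u v)
    (by
      apply LinearMap.ext; intro p
      simp only [LinearMap.comp_apply, BHlinA, BHlinB, LinearMap.coe_mk, AddHom.coe_mk,
        LinearMap.id_apply]
      ext <;> field_simp <;> ring)
    (by
      apply LinearMap.ext; intro p
      simp only [LinearMap.comp_apply, BHlinA, BHlinB, LinearMap.coe_mk, AddHom.coe_mk,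
        LinearMap.id_apply]
      ext <;> field_simp <;> ring)).toContinuousLinearEquiv

@[simp] lemma BHDequiv_apply (d u v : ℝ) (h : 2 - 6*d*(u-v) ≠ 0) (p : ℝ × ℝ) :
    BHDequiv d u v h p = ((1 - 6*d*u) * p.1 + (-1 - 6*d*v) * p.2, p.1 + p.2) := rfl

end BHaux

section BHmain

variable (d : ℝ)

lemma BHhasFDeriv (q : ℝ × ℝ) (h : 2 - 6*d*(q.1 - q.2) ≠ 0) :
    HasFDerivAt (fun q : ℝ × ℝ => (-(3*d)*(q.1*q.1+q.2*q.2)+q.1-q.2, q.1+q.2))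
      (BHDequiv d q.1 q.2 h : (ℝ × ℝ) →L[ℝ] (ℝ × ℝ)) q := by
  have hx : HasFDerivAt (fun p : ℝ × ℝ => p.1) (ContinuousLinearMap.fst ℝ ℝ ℝ) q :=
    hasFDerivAt_fst
  have hy : HasFDerivAt (fun p : ℝ × ℝ => p.2) (ContinuousLinearMap.snd ℝ ℝ ℝ) q :=
    hasFDerivAt_snd
  have h1 := ((((hx.mul hx).add (hy.mul hy)).const_mul (-(3*d))).add hx).sub hy
  have h2 := hx.add hy
  have hD := HasFDerivAt.prodMk h1 h2
  refine (hD.congr_fderiv ?_ : _)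
  apply ContinuousLinearMap.ext; intro w
  apply Prod.ext <;>
    simp [ContinuousLinearMap.prod_apply, ContinuousLinearMap.add_apply,
      ContinuousLinearMap.sub_apply, ContinuousLinearMap.smul_apply] <;> ring

end BHmain

theorem bhSeparable2_xy_add_dy_cubed' (d : ℝ) :
    ∃ (V W : Set (ℝ × ℝ)) (φ ψ : ℝ × ℝ → ℝ × ℝ) (H₁ H₂ f g h k : ℝ → ℝ),
    IsOpen V ∧ IsOpen W ∧ ((0, 0) : ℝ × ℝ) ∈ V ∧ ((0, 0) : ℝ × ℝ) ∈ W ∧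
    φ (0, 0) = (0, 0) ∧
    ContDiffOn ℝ (⊤ : ℕ∞) φ V ∧ ContDiffOn ℝ (⊤ : ℕ∞) ψ W ∧
    Set.MapsTo φ V W ∧ Set.MapsTo ψ W V ∧
    (∀ p ∈ V, ψ (φ p) = p) ∧ (∀ p ∈ W, φ (ψ p) = p) ∧
    ContDiff ℝ (⊤ : ℕ∞) H₁ ∧ ContDiff ℝ (⊤ : ℕ∞) H₂ ∧ ContDiff ℝ (⊤ : ℕ∞) f ∧
    ContDiff ℝ (⊤ : ℕ∞) g ∧ ContDiff ℝ (⊤ : ℕ∞) h ∧ ContDiff ℝ (⊤ : ℕ∞) k ∧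
    (∀ p ∈ V, (fun p : ℝ × ℝ => p.1 * p.2 + d * p.2 ^ 3) p = H₁ (φ p).1 + H₂ (φ p).2) ∧
    (∀ p ∈ V, p.1 = f (φ p).1 + g (φ p).2) ∧
    (∀ p ∈ V, p.2 = h (φ p).1 + k (φ p).2) := by
  set F : ℝ × ℝ → ℝ × ℝ :=
    fun q => (-(3*d)*(q.1*q.1+q.2*q.2)+q.1-q.2, q.1+q.2) with hFdef
  have hF : ContDiff ℝ (⊤ : ℕ∞) F := by
    apply ContDiff.prodMk <;> fun_prop
  have hFa : ContDiffAt ℝ (⊤ : ℕ∞) F (0, 0) := hF.contDiffAt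
  have h00 : (2 : ℝ) - 6*d*((0:ℝ) - (0:ℝ)) ≠ 0 := by norm_num
  have hfd0 : HasFDerivAt F ((BHDequiv d 0 0 h00 : (ℝ × ℝ) ≃L[ℝ] (ℝ × ℝ)) :
      (ℝ × ℝ) →L[ℝ] (ℝ × ℝ)) (0, 0) := BHhasFDeriv d ((0:ℝ), (0:ℝ)) h00
  have hn : ((⊤ : ℕ∞) : WithTop ℕ∞) ≠ 0 := by
    simp
  set e := hFa.toOpenPartialHomeomorph F hfd0 hn with he
  have hecoe : (e : ℝ × ℝ → ℝ × ℝ) = F := hFa.toOpenPartialHomeomorph_coe hfd0 hn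
  have h0src : ((0,0) : ℝ × ℝ) ∈ e.source := hFa.mem_toOpenPartialHomeomorph_source hfd0 hn
  have hF0 : F (0, 0) = (0, 0) := by simp [hFdef]
  -- the set where the Jacobian is invertible
  set S : Set (ℝ × ℝ) := {q | 2 - 6*d*(q.1 - q.2) ≠ 0} with hSdef
  have hSopen : IsOpen S := by
    have : Continuous fun q : ℝ × ℝ => 2 - 6*d*(q.1 - q.2) := by fun_prop
    exact isOpen_ne_fun this continuous_const
  have h0S : ((0,0) : ℝ × ℝ) ∈ S := by simp [hSdef]
  set W : Set (ℝ × ℝ) := e.source ∩ S with hWdef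
  have hWopen : IsOpen W := e.open_source.inter hSopen
  have hWsub : W ⊆ e.source := Set.inter_subset_left
  set V : Set (ℝ × ℝ) := e '' W with hVdef
  have hVopen : IsOpen V := e.isOpen_image_of_subset_source hWopen hWsub
  have h0W : ((0,0) : ℝ × ℝ) ∈ W := ⟨h0src, h0S⟩
  have h0V : ((0,0) : ℝ × ℝ) ∈ V := by
    refine ⟨(0,0), h0W, ?_⟩
    rw [hecoe] at *
    exact hF0
  have hVsubT : V ⊆ e.target := by
    rintro p ⟨q, hq, rfl⟩
    exact e.map_source (hWsub hq)
  have hsymm0 : e.symm (0, 0) = (0, 0) := by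
    have h1 := e.left_inv h0src
    have h2 : e (0,0) = (0,0) := by rw [hecoe]; exact hF0
    rw [h2] at h1; exact h1
  -- smoothness of the inverse on V
  have hsymmCD : ContDiffOn ℝ (⊤ : ℕ∞) e.symm V := by
    intro p hp
    have hpt : p ∈ e.target := hVsubT hp
    obtain ⟨q, hqW, rfl⟩ := hp
    have hq' : e.symm (e q) = q := e.left_inv (hWsub hqW)
    have hqS : 2 - 6*d*(q.1 - q.2) ≠ 0 := hqW.2
    have : ContDiffAt ℝ (⊤ : ℕ∞) e.symm (e q) := by
      apply e.contDiffAt_symm hpt (f₀' := BHDequiv d q.1 q.2 hqS)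
      · rw [hq', hecoe]; exact BHhasFDeriv d q hqS
      · rw [hq', hecoe]; exact hF.contDiffAt
    exact this.contDiffWithinAt
  refine ⟨V, W, e.symm, F, (fun u => -2*d*u^3 + u^2), (fun v => -2*d*v^3 - v^2),
    (fun u => -(3*d)*u^2 + u), (fun v => -(3*d)*v^2 - v), id, id,
    hVopen, hWopen, h0V, h0W, hsymm0, hsymmCD, hF.contDiffOn, ?_, ?_, ?_, ?_,
    by fun_prop, by fun_prop, by fun_prop, by fun_prop, contDiff_id, contDiff_id,
    ?_, ?_, ?_⟩
  · rintro p ⟨q, hqW, rfl⟩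
    rwa [e.left_inv (hWsub hqW)]
  · intro q hq
    rw [← hecoe]
    exact ⟨q, hq, rfl⟩
  · rintro p ⟨q, hqW, rfl⟩
    rw [e.left_inv (hWsub hqW), hecoe]
  · intro q hq
    rw [← hecoe]
    exact e.left_inv (hWsub hq)
  · rintro p ⟨q, hqW, rfl⟩
    rw [e.left_inv (hWsub hqW), hecoe]
    simp only [hFdef]
    ring
  · rintro p ⟨q, hqW, rfl⟩
    rw [e.left_inv (hWsub hqW), hecoe]
    simp only [hFdef]
    ring
  · rintro p ⟨q, hqW, rfl⟩
    rw [e.left_inv (hWsub hqW), hecoe]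
    simp only [hFdef, id]

/-- For every `d ∈ ℝ`, the Hamiltonian `H(x,y) = xy + dy³` is BH-separable. -/
theorem bhSeparable2_xy_add_dy_cubed (d : ℝ) :
    BHSeparable2 (fun p : ℝ × ℝ => p.1 * p.2 + d * p.2 ^ 3) := by
  exact bhSeparable2_xy_add_dy_cubed' d
end

section
/- Let c, d ∈ ℝ and k ∈ ℝ with k ≠ 0, and let H(x,y) = xy + ck²x³ + 3dk²x²y + 3cxy² + dy³. Then for all u, v ∈ ℝ the identity H(u+v, k(v−u)) = (−ku² + (4ck² − 4dk³)u³) + (kv² + (4ck² + 4dk³)v³) holds, and consequently H is BH-separable (separated by the linear change of coordinates x = u + v, y = k(v − u)). -/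
/-- For `k ≠ 0`, the Hamiltonian `H(x,y) = xy + ck²x³ + 3dk²x²y + 3cxy² + dy³` satisfies
`H(u+v, k(v−u)) = (−ku² + (4ck² − 4dk³)u³) + (kv² + (4ck² + 4dk³)v³)` and is therefore
BH-separable (separated by the linear change of coordinates `x = u + v`, `y = k(v−u)`). -/
theorem bhSeparable2_family_x (c d k : ℝ) (hk : k ≠ 0) :
    (∀ u v : ℝ,
      (fun p : ℝ × ℝ =>
          p.1 * p.2 + c * k ^ 2 * p.1 ^ 3 + 3 * d * k ^ 2 * p.1 ^ 2 * p.2 +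
            3 * c * p.1 * p.2 ^ 2 + d * p.2 ^ 3) (u + v, k * (v - u)) =
        (-k * u ^ 2 + (4 * c * k ^ 2 - 4 * d * k ^ 3) * u ^ 3) +
          (k * v ^ 2 + (4 * c * k ^ 2 + 4 * d * k ^ 3) * v ^ 3)) ∧
    BHSeparable2 (fun p : ℝ × ℝ =>
      p.1 * p.2 + c * k ^ 2 * p.1 ^ 3 + 3 * d * k ^ 2 * p.1 ^ 2 * p.2 +
        3 * c * p.1 * p.2 ^ 2 + d * p.2 ^ 3) := by

  have key : ∀ u v : ℝ,
      (fun p : ℝ × ℝ =>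
          p.1 * p.2 + c * k ^ 2 * p.1 ^ 3 + 3 * d * k ^ 2 * p.1 ^ 2 * p.2 +
            3 * c * p.1 * p.2 ^ 2 + d * p.2 ^ 3) (u + v, k * (v - u)) =
        (-k * u ^ 2 + (4 * c * k ^ 2 - 4 * d * k ^ 3) * u ^ 3) +
          (k * v ^ 2 + (4 * c * k ^ 2 + 4 * d * k ^ 3) * v ^ 3) := by
    intro u v; simp only; ring
  refine ⟨key, Set.univ, Set.univ,
    (fun p => ((p.1 - p.2 / k) / 2, (p.1 + p.2 / k) / 2)),
    (fun q => (q.1 + q.2, k * (q.2 - q.1))),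
    (fun u => -k * u ^ 2 + (4 * c * k ^ 2 - 4 * d * k ^ 3) * u ^ 3),
    (fun v => k * v ^ 2 + (4 * c * k ^ 2 + 4 * d * k ^ 3) * v ^ 3),
    id, id, (fun u => -(k * u)), (fun v => k * v),
    isOpen_univ, isOpen_univ, trivial, trivial, by simp, ?_, ?_,
    Set.mapsTo_univ _ _, Set.mapsTo_univ _ _, ?_, ?_, ?_, ?_,
    contDiff_id, contDiff_id, ?_, ?_, ?_, ?_, ?_⟩
  · exact (ContDiff.prodMk (((contDiff_fst.sub (contDiff_snd.div_const k)).div_const 2))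
      (((contDiff_fst.add (contDiff_snd.div_const k)).div_const 2))).contDiffOn
  · exact (ContDiff.prodMk (contDiff_fst.add contDiff_snd)
      (contDiff_const.mul (contDiff_snd.sub contDiff_fst))).contDiffOn
  · intro p _
    simp only
    ext <;> field_simp <;> ring
  · intro p _
    simp only
    ext <;> field_simp <;> ring
  · fun_prop
  · fun_prop
  · fun_prop
  · fun_prop
  · intro p _
    have := key ((p.1 - p.2 / k) / 2) ((p.1 + p.2 / k) / 2)
    simp only at this ⊢
    have h1 : (p.1 - p.2 / k) / 2 + (p.1 + p.2 / k) / 2 = p.1 := by ring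
    have h2 : k * ((p.1 + p.2 / k) / 2 - (p.1 - p.2 / k) / 2) = p.2 := by
      field_simp; ring
    rw [h1, h2] at this
    exact this
  · intro p _; simp only [id]; ring
  · intro p _; simp only; field_simp; ring
end

section
/- Let c, d ∈ ℝ and k ∈ ℝ with k ≠ 0. Then the function H : ℝ² → ℝ given by H(x,y) = xy + dx³ + 3cx²y + 3dk²xy² + ck²y³ is BH-separable. -/
/-- For `k ≠ 0`, the Hamiltonian `H(x,y) = xy + dx³ + 3cx²y + 3dk²xy² + ck²y³` is
BH-separable. -/
theorem bhSeparable2_family_y (c d k : ℝ) (hk : k ≠ 0) :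
    BHSeparable2 (fun p : ℝ × ℝ =>
      p.1 * p.2 + d * p.1 ^ 3 + 3 * c * p.1 ^ 2 * p.2 +
        3 * d * k ^ 2 * p.1 * p.2 ^ 2 + c * k ^ 2 * p.2 ^ 3) := by
  refine ⟨Set.univ, Set.univ,
    (fun p => (p.1 + k * p.2, p.1 - k * p.2)),
    (fun q => ((q.1 + q.2) / 2, (q.1 - q.2) / (2 * k))),
    (fun u => u ^ 2 / (4 * k) + (d * k + c) / (2 * k) * u ^ 3),
    (fun v => -(v ^ 2 / (4 * k)) + (d * k - c) / (2 * k) * v ^ 3),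
    (fun u => u / 2), (fun v => v / 2),
    (fun u => u / (2 * k)), (fun v => -(v / (2 * k))),
    isOpen_univ, isOpen_univ, trivial, trivial, by simp,
    ?_, ?_, Set.mapsTo_univ _ _, Set.mapsTo_univ _ _, ?_, ?_,
    ?_, ?_, ?_, ?_, ?_, ?_, ?_, ?_, ?_⟩
  · exact ContDiff.contDiffOn (by fun_prop)
  · exact ContDiff.contDiffOn (by simp only [div_eq_mul_inv]; fun_prop)
  · intro p _; simp only []; ext <;> field_simp <;> ring_nf
  · intro p _; simp only []; ext <;> field_simp <;> ring_nf
  · simp only [div_eq_mul_inv]; fun_prop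
  · simp only [div_eq_mul_inv]; fun_prop
  · simp only [div_eq_mul_inv]; fun_prop
  · simp only [div_eq_mul_inv]; fun_prop
  · simp only [div_eq_mul_inv]; fun_prop
  · simp only [div_eq_mul_inv]; fun_prop
  · intro p _; field_simp; try ring
  · intro p _; field_simp; try ring
  · intro p _; field_simp; try ring
end

section
/- Let H be a smooth real function on a neighborhood of the origin of ℝ² with H(0,0) = 0, vanishing first derivatives at the origin, and whose quadratic Taylor part at the origin is xy, i.e., ∂²H/∂x²(0,0) = ∂²H/∂y²(0,0) = 0 and ∂²H/∂x∂y(0,0) = 1. Suppose there are smooth one-variable functions f, g, h, k, H₁, H₂ : ℝ → ℝ with f(0) = g(0) = h(0) = k(0) = 0, such that the map Ψ(u,v) = (f(u)+g(v), h(u)+k(v)) has invertible Jacobian matrix at (0,0), and H(Ψ(u,v)) = H₁(u) + H₂(v) for all (u,v) in a neighborhood of (0,0). Then f'(0), g'(0), h'(0), k'(0) are all nonzero. -/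
private lemma one_le_top' : (1 : WithTop ℕ∞) ≤ ((⊤ : ℕ∞) : WithTop ℕ∞) := by
  rw [show (1 : WithTop ℕ∞) = ((1 : ℕ∞) : WithTop ℕ∞) from rfl]
  exact WithTop.coe_le_coe.mpr le_top

private lemma two_le_top' : (2 : WithTop ℕ∞) ≤ ((⊤ : ℕ∞) : WithTop ℕ∞) := by
  rw [show (2 : WithTop ℕ∞) = ((2 : ℕ∞) : WithTop ℕ∞) from rfl]
  exact WithTop.coe_le_coe.mpr le_top

private lemma top_add_one_le_top' :
    ((⊤ : ℕ∞) : WithTop ℕ∞) + 1 ≤ ((⊤ : ℕ∞) : WithTop ℕ∞) := by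
  rw [show (1 : WithTop ℕ∞) = ((1 : ℕ∞) : WithTop ℕ∞) from rfl, ← WithTop.coe_add]
  exact WithTop.coe_le_coe.mpr (by simp)

/-- If `H` is smooth near the origin of ℝ² with vanishing 1-jet and quadratic Taylor
part `xy` at the origin, and if a separated change of variables
`Ψ(u,v) = (f(u)+g(v), h(u)+k(v))` with `Ψ(0,0) = (0,0)` and invertible Jacobian at the
origin separates `H` near the origin, then `f'(0), g'(0), h'(0), k'(0)` are all
nonzero. -/
theorem derivs_ne_zero_of_separating_change (H : ℝ × ℝ → ℝ)
    (hH : ∃ O : Set (ℝ × ℝ), IsOpen O ∧ ((0, 0) : ℝ × ℝ) ∈ O ∧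
      ContDiffOn ℝ (⊤ : ℕ∞) H O)
    (h00 : H (0, 0) = 0)
    (hx : fderiv ℝ H (0, 0) (1, 0) = 0)
    (hy : fderiv ℝ H (0, 0) (0, 1) = 0)
    (hxx : fderiv ℝ (fun z => fderiv ℝ H z (1, 0)) (0, 0) (1, 0) = 0)
    (hyy : fderiv ℝ (fun z => fderiv ℝ H z (0, 1)) (0, 0) (0, 1) = 0)
    (hxy : fderiv ℝ (fun z => fderiv ℝ H z (1, 0)) (0, 0) (0, 1) = 1)
    (f g h k H₁ H₂ : ℝ → ℝ)
    (hf : ContDiff ℝ (⊤ : ℕ∞) f) (hg : ContDiff ℝ (⊤ : ℕ∞) g)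
    (hh : ContDiff ℝ (⊤ : ℕ∞) h) (hk : ContDiff ℝ (⊤ : ℕ∞) k)
    (hH₁ : ContDiff ℝ (⊤ : ℕ∞) H₁) (hH₂ : ContDiff ℝ (⊤ : ℕ∞) H₂)
    (hf0 : f 0 = 0) (hg0 : g 0 = 0) (hh0 : h 0 = 0) (hk0 : k 0 = 0)
    (hjac : IsUnit (Matrix.of ![![deriv f 0, deriv g 0], ![deriv h 0, deriv k 0]]))
    (hsep : ∃ O : Set (ℝ × ℝ), IsOpen O ∧ ((0, 0) : ℝ × ℝ) ∈ O ∧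
      ∀ p ∈ O, H (f p.1 + g p.2, h p.1 + k p.2) = H₁ p.1 + H₂ p.2) :
    deriv f 0 ≠ 0 ∧ deriv g 0 ≠ 0 ∧ deriv h 0 ≠ 0 ∧ deriv k 0 ≠ 0 := by
  obtain ⟨O₁, hO₁, h0O₁, hHC⟩ := hH
  obtain ⟨O₂, hO₂, h0O₂, hsepEq⟩ := hsep
  set a := deriv f 0 with ha_def
  set b := deriv g 0 with hb_def
  set c := deriv h 0 with hc_def
  set d := deriv k 0 with hd_def
  -- determinant nonzero
  have hdet : a * d - b * c ≠ 0 := by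
    have h1 : IsUnit (Matrix.of ![![a, b], ![c, d]]).det :=
      (Matrix.isUnit_iff_isUnit_det _).mp hjac
    have h2 : (Matrix.of ![![a, b], ![c, d]]).det = a * d - b * c := by
      simp [Matrix.det_fin_two]
    rw [h2] at h1
    exact h1.ne_zero
  -- smoothness at the origin
  have hHat : ContDiffAt ℝ (⊤ : ℕ∞) H (0, 0) := hHC.contDiffAt (hO₁.mem_nhds h0O₁)
  have hfd : ContDiffAt ℝ (⊤ : ℕ∞) (fderiv ℝ H) (0, 0) :=
    hHat.fderiv_right top_add_one_le_top'
  have hBd : DifferentiableAt ℝ (fderiv ℝ H) (0, 0) := hfd.differentiableAt (by simp)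
  set B := fderiv ℝ (fderiv ℝ H) (0, 0) with hB_def
  have hB : HasFDerivAt (fderiv ℝ H) B (0, 0) := hBd.hasFDerivAt
  -- second partials in terms of B
  have key : ∀ v w : ℝ × ℝ, fderiv ℝ (fun z => fderiv ℝ H z w) (0, 0) v = B v w := by
    intro v w
    have h1 : HasFDerivAt (fun z => fderiv ℝ H z w)
        ((ContinuousLinearMap.apply ℝ ℝ w).comp B) (0, 0) :=
      (ContinuousLinearMap.apply ℝ ℝ w).hasFDerivAt.comp _ hB
    rw [h1.fderiv]
    rfl
  have hB11 : B (1, 0) (1, 0) = 0 := by rw [← key]; exact hxx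
  have hB22 : B (0, 1) (0, 1) = 0 := by rw [← key]; exact hyy
  have hB21 : B (0, 1) (1, 0) = 1 := by rw [← key]; exact hxy
  have hsym : B (1, 0) (0, 1) = 1 := by
    have hs := hHat.isSymmSndFDerivAt (by rw [minSmoothness_of_isRCLikeNormedField]; exact two_le_top')
    have h2 := hs (1, 0) (0, 1)
    rw [← hB_def] at h2
    rw [h2, hB21]
  -- derivatives of f,g,h,k at 0
  have haf : HasDerivAt f a 0 := ((hf.differentiable (by simp)) 0).hasDerivAt
  have hbg : HasDerivAt g b 0 := ((hg.differentiable (by simp)) 0).hasDerivAt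
  have hch : HasDerivAt h c 0 := ((hh.differentiable (by simp)) 0).hasDerivAt
  have hdk : HasDerivAt k d 0 := ((hk.differentiable (by simp)) 0).hasDerivAt
  -- the good neighborhood
  have hΨc : Continuous (fun p : ℝ × ℝ => ((f p.1 + g p.2, h p.1 + k p.2) : ℝ × ℝ)) :=
    (((hf.continuous.comp continuous_fst).add (hg.continuous.comp continuous_snd)).prodMk
      ((hh.continuous.comp continuous_fst).add (hk.continuous.comp continuous_snd)))
  set U : Set (ℝ × ℝ) :=
    O₂ ∩ ((fun p : ℝ × ℝ => ((f p.1 + g p.2, h p.1 + k p.2) : ℝ × ℝ)) ⁻¹' O₁) with hU_def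
  have hUopen : IsOpen U := hO₂.inter (hO₁.preimage hΨc)
  have h0U : ((0, 0) : ℝ × ℝ) ∈ U := by
    refine ⟨h0O₂, ?_⟩
    show ((f 0 + g 0, h 0 + k 0) : ℝ × ℝ) ∈ O₁
    rw [hf0, hg0, hh0, hk0]
    simpa using h0O₁
  -- G u = fderiv H (f u, h u) (b, d)
  set G : ℝ → ℝ := fun u => (fderiv ℝ H (f u, h u)) (b, d) with hG_def
  -- Step A: G is eventually constant
  have hGconst : G =ᶠ[nhds (0 : ℝ)] fun _ => deriv H₂ 0 := by
    have hmem : {u : ℝ | ((u, 0) : ℝ × ℝ) ∈ U} ∈ nhds (0 : ℝ) := by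
      have hcont : Continuous (fun u : ℝ => ((u, 0) : ℝ × ℝ)) := by fun_prop
      exact hcont.continuousAt.preimage_mem_nhds (hUopen.mem_nhds h0U)
    filter_upwards [hmem] with u hu
    have hvmem : {v : ℝ | ((u, v) : ℝ × ℝ) ∈ U} ∈ nhds (0 : ℝ) := by
      have hcont : Continuous (fun v : ℝ => ((u, v) : ℝ × ℝ)) := by fun_prop
      exact hcont.continuousAt.preimage_mem_nhds (hUopen.mem_nhds hu)
    have heq : (fun v => H (f u + g v, h u + k v)) =ᶠ[nhds (0 : ℝ)]
        (fun v => H₁ u + H₂ v) := by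
      filter_upwards [hvmem] with v hv
      exact hsepEq _ hv.1
    have hγ : HasDerivAt (fun v : ℝ => ((f u + g v, h u + k v) : ℝ × ℝ)) ((b, d)) 0 :=
      HasDerivAt.prodMk (hbg.const_add (f u)) (hdk.const_add (h u))
    have hpt : ((f u + g 0, h u + k 0) : ℝ × ℝ) = (f u, h u) := by
      rw [hg0, hk0]; simp
    have hO₁mem : ((f u, h u) : ℝ × ℝ) ∈ O₁ := by
      have h2 := hu.2
      rw [Set.mem_preimage] at h2
      rwa [hpt] at h2
    have hHdiff : DifferentiableAt ℝ H (f u, h u) :=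
      (hHC.contDiffAt (hO₁.mem_nhds hO₁mem)).differentiableAt (by simp)
    have hF : HasFDerivAt H (fderiv ℝ H (f u, h u)) ((f u + g 0, h u + k 0) : ℝ × ℝ) := by
      rw [hpt]; exact hHdiff.hasFDerivAt
    have hL : HasDerivAt (fun v => H (f u + g v, h u + k v))
        ((fderiv ℝ H (f u, h u)) (b, d)) 0 := hF.comp_hasDerivAt 0 hγ
    have hR : HasDerivAt (fun v => H₁ u + H₂ v) (deriv H₂ 0) 0 :=
      (((hH₂.differentiable (by simp)) 0).hasDerivAt).const_add (H₁ u)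
    have hde : deriv (fun v => H (f u + g v, h u + k v)) 0
        = deriv (fun v => H₁ u + H₂ v) 0 := heq.deriv_eq
    rw [hL.deriv, hR.deriv] at hde
    exact hde
  -- Step B: deriv G 0 = 0
  have hGderiv0 : deriv G 0 = 0 := by
    rw [hGconst.deriv_eq]
    exact deriv_const _ _
  -- Step C: deriv G 0 = B (a,c) (b,d)
  have hγ0 : HasDerivAt (fun u : ℝ => ((f u, h u) : ℝ × ℝ)) ((a, c)) 0 :=
    HasDerivAt.prodMk haf hch
  have hG' : HasDerivAt G (B (a, c) (b, d)) 0 := by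
    have hF0 : HasFDerivAt (fderiv ℝ H) B ((f 0, h 0) : ℝ × ℝ) := by
      rw [hf0, hh0]; exact hB
    have h1 : HasDerivAt (fun u : ℝ => fderiv ℝ H (f u, h u)) (B (a, c)) 0 :=
      hF0.comp_hasDerivAt 0 hγ0
    have h2 := (ContinuousLinearMap.apply ℝ ℝ ((b, d) : ℝ × ℝ)).hasFDerivAt.comp_hasDerivAt 0 h1
    exact h2
  have hsum : B (a, c) (b, d) = 0 := by rw [← hG'.deriv]; exact hGderiv0
  -- expand bilinearly
  have hexp : B (a, c) (b, d) = a * d + b * c := by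
    have e1 : ((a, c) : ℝ × ℝ) = a • ((1, 0) : ℝ × ℝ) + c • ((0, 1) : ℝ × ℝ) := by
      simp [Prod.ext_iff]
    have e2 : ((b, d) : ℝ × ℝ) = b • ((1, 0) : ℝ × ℝ) + d • ((0, 1) : ℝ × ℝ) := by
      simp [Prod.ext_iff]
    rw [e1, e2, map_add, map_smul]
    simp only [ContinuousLinearMap.add_apply, ContinuousLinearMap.coe_smul',
      Pi.smul_apply, map_add, map_smul, smul_eq_mul, hB11, hB22, hB21, hsym]
    ring
  rw [hexp] at hsum
  refine ⟨fun h0 => hdet ?_, fun h0 => hdet ?_, fun h0 => hdet ?_, fun h0 => hdet ?_⟩ <;>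
    (rw [h0] at hsum ⊢; ring_nf at hsum ⊢; linarith)
end
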